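/- arXiv:1710.06988 — 7 statements merged into one kernel-verified Lean document; each statement's English description precedes it below -/
import Mathlib

section
/- For all real numbers r, s with 0 ≤ r ≤ s, one has (1/√2)·√(s² − r²) ≤ √(cosh s − cosh r) ≤ (1/√2)·√(s² − r²)·exp((r² + s²)/24). -/
/-!
Write `s = a + b` and `r = a - b` with `a, b ≥ 0`, so that `cosh s - cosh r = 2 sinh a sinh b`
and `(s² - r²) / 2 = 2ab`. Both bounds then follow from `x ≤ sinh x ≤ x exp (x² / 6)` for
`x ≥ 0`; the upper one is a termwise comparison of power series, since `6ⁿ n! ≤ (2n + 1)!`.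
-/

open Nat

theorem Nat.six_pow_mul_factorial_le_factorial_two_mul_add_one (n : ℕ) :
    6 ^ n * n ! ≤ (2 * n + 1)! := by
  induction n with
  | zero => simp
  | succ n ih =>
    rw [show 2 * (n + 1) + 1 = 2 * n + 1 + 1 + 1 by ring, factorial_succ (2 * n + 1 + 1),
      factorial_succ (2 * n + 1), factorial_succ n]
    calc 6 ^ (n + 1) * ((n + 1) * n !) = 6 * (n + 1) * (6 ^ n * n !) := by ring
      _ ≤ (2 * n + 1 + 1 + 1) * (2 * n + 1 + 1) * (2 * n + 1)! :=
        Nat.mul_le_mul (by nlinarith) ih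
      _ = _ := by ring

namespace Real

theorem hasSum_mul_exp_sq_div_six (x : ℝ) :
    HasSum (fun n ↦ x ^ (2 * n + 1) / ↑(6 ^ n * n !)) (x * exp (x ^ 2 / 6)) := by
  rw [exp_eq_exp_ℝ]
  refine ((NormedSpace.expSeries_div_hasSum_exp (x ^ 2 / 6)).mul_left x).congr_fun fun n ↦ ?_
  rw [div_pow, ← pow_mul]; push_cast; ring

theorem sinh_le_mul_exp_sq_div_six {x : ℝ} (hx : 0 ≤ x) : sinh x ≤ x * exp (x ^ 2 / 6) :=
  hasSum_le
    (fun n ↦ by gcongr; exact_mod_cast n.six_pow_mul_factorial_le_factorial_two_mul_add_one)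
    (hasSum_sinh x) (hasSum_mul_exp_sq_div_six x)

theorem cosh_add_sub_cosh_sub (a b : ℝ) : cosh (a + b) - cosh (a - b) = 2 * sinh a * sinh b := by
  rw [cosh_add, cosh_sub]; ring

variable {r s : ℝ}

theorem sq_sub_sq_div_two_le_cosh_sub_cosh (hr : 0 ≤ r) (hrs : r ≤ s) :
    (s ^ 2 - r ^ 2) / 2 ≤ cosh s - cosh r := by
  obtain ⟨a, b, rfl, rfl⟩ : ∃ a b, s = a + b ∧ r = a - b :=
    ⟨(s + r) / 2, (s - r) / 2, by ring, by ring⟩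
  have hsa : a ≤ sinh a := self_le_sinh_iff.2 (by linarith)
  have hsb : b ≤ sinh b := self_le_sinh_iff.2 (by linarith)
  calc ((a + b) ^ 2 - (a - b) ^ 2) / 2 = 2 * a * b := by ring
    _ ≤ 2 * sinh a * sinh b := by gcongr <;> linarith
    _ = cosh (a + b) - cosh (a - b) := (cosh_add_sub_cosh_sub a b).symm

theorem cosh_sub_cosh_le (hr : 0 ≤ r) (hrs : r ≤ s) :
    cosh s - cosh r ≤ (s ^ 2 - r ^ 2) / 2 * exp ((r ^ 2 + s ^ 2) / 12) := by
  obtain ⟨a, b, rfl, rfl⟩ : ∃ a b, s = a + b ∧ r = a - b :=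
    ⟨(s + r) / 2, (s - r) / 2, by ring, by ring⟩
  have ha : 0 ≤ a := by linarith
  have hb : 0 ≤ b := by linarith
  have hsa := sinh_le_mul_exp_sq_div_six ha
  have hsb := sinh_le_mul_exp_sq_div_six hb
  calc cosh (a + b) - cosh (a - b) = 2 * sinh a * sinh b := cosh_add_sub_cosh_sub a b
    _ ≤ 2 * (a * exp (a ^ 2 / 6)) * (b * exp (b ^ 2 / 6)) := by gcongr
    _ = 2 * a * b * (exp (a ^ 2 / 6) * exp (b ^ 2 / 6)) := by ring
    _ = ((a + b) ^ 2 - (a - b) ^ 2) / 2 * exp (((a - b) ^ 2 + (a + b) ^ 2) / 12) := by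
      rw [← exp_add]; ring_nf

end Real

open Real in
theorem cosh_diff_sqrt_bounds (r s : ℝ) (hr : 0 ≤ r) (hrs : r ≤ s) :
    (1 / Real.sqrt 2) * Real.sqrt (s ^ 2 - r ^ 2) ≤ Real.sqrt (Real.cosh s - Real.cosh r) ∧
      Real.sqrt (Real.cosh s - Real.cosh r) ≤
        (1 / Real.sqrt 2) * Real.sqrt (s ^ 2 - r ^ 2) * Real.exp ((r ^ 2 + s ^ 2) / 24) := by
  have hsq : 0 ≤ s ^ 2 - r ^ 2 := by nlinarith
  have hhalf : 1 / √2 * √(s ^ 2 - r ^ 2) = √((s ^ 2 - r ^ 2) / 2) := by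
    rw [sqrt_div hsq]; ring
  refine ⟨hhalf ▸ sqrt_le_sqrt (sq_sub_sq_div_two_le_cosh_sub_cosh hr hrs), ?_⟩
  calc √(cosh s - cosh r) ≤ √((s ^ 2 - r ^ 2) / 2 * exp ((r ^ 2 + s ^ 2) / 12)) :=
        sqrt_le_sqrt (cosh_sub_cosh_le hr hrs)
    _ = 1 / √2 * √(s ^ 2 - r ^ 2) * exp ((r ^ 2 + s ^ 2) / 24) := by
      rw [sqrt_mul (by positivity), hhalf, ← exp_half]; ring_nf
end

section
/- For all real u with 0 ≤ u ≤ 4·log 2, one has log(sech(u/2)) ≤ −u²/12. -/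
/-!
Writing `x = u / 2`, the claim is `x ^ 2 / 3 ≤ log (cosh x)`, i.e. `exp (x ^ 2 / 3) ≤ cosh x`.
Since `exp (2 / 3) ≤ 2` (as `2 / 3 < log 2`), convexity puts `exp` below the chord
`t ↦ 1 + 3 t / 2` on `[0, 2 / 3]`; at `t = x ^ 2 / 3` this chord is `1 + x ^ 2 / 2 ≤ cosh x`.
The range `0 ≤ u ≤ 4 log 2` gives `x ^ 2 ≤ 2`, i.e. `t ≤ 2 / 3`.
-/

open Real Set

namespace Real

theorem one_add_sq_div_two_le_cosh (x : ℝ) : 1 + x ^ 2 / 2 ≤ cosh x := by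
  have hsinh : |x / 2| ≤ |sinh (x / 2)| := by
    rw [abs_sinh, self_le_sinh_iff]
    exact abs_nonneg _
  have hsq : (x / 2) ^ 2 ≤ sinh (x / 2) ^ 2 := sq_le_sq.2 hsinh
  calc 1 + x ^ 2 / 2 = 1 + 2 * (x / 2) ^ 2 := by ring
    _ ≤ 1 + 2 * sinh (x / 2) ^ 2 := by gcongr
    _ = cosh (2 * (x / 2)) := by rw [cosh_two_mul, cosh_sq]; ring
    _ = cosh x := by rw [mul_div_cancel₀ x two_ne_zero]

theorem exp_le_one_add_mul_of_mem_Icc {c t : ℝ} (hc : 0 < c) (ht : t ∈ Icc 0 c) :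
    exp t ≤ 1 + (exp c - 1) / c * t := by
  have ha : 0 ≤ 1 - t / c := by linarith [(div_le_one hc).2 ht.2]
  have hab : 1 - t / c + t / c = 1 := by ring
  have h := convexOn_exp.2 (mem_univ 0) (mem_univ c) ha (div_nonneg ht.1 hc.le) hab
  have hct : t / c * c = t := div_mul_cancel₀ t hc.ne'
  simp only [smul_eq_mul, mul_zero, zero_add, exp_zero, hct] at h
  calc exp t ≤ (1 - t / c) * 1 + t / c * exp c := h
    _ = 1 + (exp c - 1) / c * t := by ring

theorem exp_le_one_add_three_halves_mul {t : ℝ} (ht : t ∈ Icc 0 (2 / 3)) :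
    exp t ≤ 1 + 3 / 2 * t := by
  have hexp : exp (2 / 3) ≤ 2 := by
    rw [← le_log_iff_exp_le two_pos]
    linarith [log_two_gt_d9]
  calc exp t ≤ 1 + (exp (2 / 3) - 1) / (2 / 3) * t :=
        exp_le_one_add_mul_of_mem_Icc (by norm_num) ht
    _ ≤ 1 + 3 / 2 * t := by
        gcongr 1 + ?_ * t
        · exact ht.1
        · linarith

theorem sq_div_three_le_log_cosh {x : ℝ} (hx : x ^ 2 ≤ 2) : x ^ 2 / 3 ≤ log (cosh x) := by
  rw [le_log_iff_exp_le (cosh_pos x)]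
  calc exp (x ^ 2 / 3) ≤ 1 + 3 / 2 * (x ^ 2 / 3) :=
        exp_le_one_add_three_halves_mul ⟨by positivity, by linarith⟩
    _ = 1 + x ^ 2 / 2 := by ring
    _ ≤ cosh x := one_add_sq_div_two_le_cosh x

end Real

theorem log_sech_le (u : ℝ) (hu0 : 0 ≤ u) (hu1 : u ≤ 4 * Real.log 2) :
    Real.log (1 / Real.cosh (u / 2)) ≤ -u ^ 2 / 12 := by
  have hsq : (u / 2) ^ 2 ≤ 2 := by
    have hx : u / 2 ≤ 2 * log 2 := by linarith
    nlinarith [log_two_lt_d9, pow_le_pow_left₀ (by positivity) hx 2]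
  have h := sq_div_three_le_log_cosh hsq
  rw [one_div, log_inv]
  linarith
end

section
/- Let γ > 0 and let ξ be a random variable with Beta(1, γ) distribution (density γ(1−x)^{γ−1} on [0,1]). Then for all u ≥ 0, P(log((1+√ξ)/(1−√ξ)) > u) = sech(u/2)^{2γ}. -/
open MeasureTheory

/-- The Beta(1,γ) distribution: density `γ (1-x)^(γ-1)` on `[0,1]` w.r.t. Lebesgue. -/
noncomputable def betaOneGamma (γ : ℝ) : Measure ℝ :=
  volume.withDensity fun x =>
    ENNReal.ofReal (Set.indicator (Set.Icc (0 : ℝ) 1) (fun y => γ * (1 - y) ^ (γ - 1)) x)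

/-!
On `[0, 1)` we have `log ((1 + √ξ) / (1 - √ξ)) = 2 artanh √ξ`, so the event is
`{ξ > tanh (u / 2) ^ 2}`. The Beta(1,γ) tail is `P(ξ > a) = (1 - a) ^ γ`, and
`1 - tanh² = sech²` turns `(1 - tanh (u / 2) ^ 2) ^ γ` into `sech (u / 2) ^ (2γ)`.
-/

open Set Real

namespace Real

theorem tanh_nonneg {x : ℝ} (hx : 0 ≤ x) : 0 ≤ tanh x := by
  rw [tanh_eq_sinh_div_cosh]
  exact div_nonneg (sinh_nonneg_iff.mpr hx) (cosh_pos x).le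

theorem one_sub_tanh_sq (x : ℝ) : 1 - tanh x ^ 2 = (1 / cosh x) ^ 2 := by
  have := cosh_sq_sub_sinh_sq x
  have := (cosh_pos x).ne'
  rw [tanh_eq_sinh_div_cosh]
  field_simp
  linarith

theorem lt_two_mul_artanh_iff {s : ℝ} (hs : s ∈ Ioo (-1) 1) (u : ℝ) :
    u < 2 * artanh s ↔ tanh (u / 2) < s := by
  rw [← artanh_lt_artanh_iff ⟨neg_one_lt_tanh _, tanh_lt_one _⟩ hs, artanh_tanh]
  constructor <;> intro h <;> linarith

end Real

theorem lt_log_one_add_sqrt_div_one_sub_sqrt_iff {u x : ℝ} (hu : 0 ≤ u) (hx : x ∈ Ico 0 1) :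
    u < log ((1 + √x) / (1 - √x)) ↔ tanh (u / 2) ^ 2 < x := by
  have hs : √x ∈ Ioo (-1) 1 :=
    ⟨by linarith [sqrt_nonneg x], (sqrt_lt' one_pos).2 (by simpa using hx.2)⟩
  have hlog : log ((1 + √x) / (1 - √x)) = 2 * artanh √x := by
    rw [artanh_eq_half_log (Ioo_subset_Icc_self hs)]
    ring
  rw [hlog, lt_two_mul_artanh_iff hs, lt_sqrt (tanh_nonneg (by linarith))]

theorem inter_Icc_setOf_lt_log_eq_Ioo {u : ℝ} (hu : 0 ≤ u) :
    Icc (0 : ℝ) 1 ∩ {x | u < log ((1 + √x) / (1 - √x))} = Ioo (tanh (u / 2) ^ 2) 1 := by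
  ext x
  simp only [mem_inter_iff, mem_Icc, mem_ofPred_eq, mem_Ioo]
  constructor
  · rintro ⟨⟨hx₀, hx₁⟩, hlt⟩
    have hx₁' : x < 1 := by
      refine hx₁.lt_of_ne ?_
      rintro rfl
      -- at `x = 1` the quotient is `2 / 0 = 0`, and `log 0 = 0`
      simp only [sqrt_one, sub_self, div_zero, log_zero] at hlt
      linarith
    exact ⟨(lt_log_one_add_sqrt_div_one_sub_sqrt_iff hu ⟨hx₀, hx₁'⟩).1 hlt, hx₁'⟩
  · rintro ⟨hlt, hx₁⟩
    have hx₀ : 0 ≤ x := (sq_nonneg _).trans hlt.le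
    exact ⟨⟨hx₀, hx₁.le⟩, (lt_log_one_add_sqrt_div_one_sub_sqrt_iff hu ⟨hx₀, hx₁⟩).2 hlt⟩

theorem integral_mul_one_sub_rpow_sub_one {γ a : ℝ} (hγ : 0 < γ) :
    ∫ x in a..1, γ * (1 - x) ^ (γ - 1) = (1 - a) ^ γ := by
  rw [intervalIntegral.integral_const_mul, intervalIntegral.integral_comp_sub_left (· ^ (γ - 1)),
    integral_rpow (Or.inl (by linarith)), sub_self, sub_add_cancel, zero_rpow hγ.ne', sub_zero]
  field_simp

theorem betaOneGamma_compl_Icc (γ : ℝ) : betaOneGamma γ (Icc 0 1)ᶜ = 0 := by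
  rw [betaOneGamma, withDensity_apply _ measurableSet_Icc.compl]
  exact (setLIntegral_congr_fun measurableSet_Icc.compl fun x hx ↦ by
    simp [indicator_of_notMem hx]).trans lintegral_zero

theorem betaOneGamma_Ioo {γ a : ℝ} (hγ : 0 < γ) (ha₀ : 0 ≤ a) (ha₁ : a ≤ 1) :
    betaOneGamma γ (Ioo a 1) = ENNReal.ofReal ((1 - a) ^ γ) := by
  have hint : IntegrableOn (fun x ↦ γ * (1 - x) ^ (γ - 1)) (Ioo a 1) := by
    have := ((intervalIntegral.intervalIntegrable_rpow' (a := 1 - a) (b := 0)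
      (by linarith : -1 < γ - 1)).comp_sub_left 1).const_mul γ
    simp only [sub_sub_cancel, sub_zero] at this
    exact ((intervalIntegrable_iff_integrableOn_Ioc_of_le ha₁).1 this).mono_set Ioo_subset_Ioc_self
  have hnonneg : 0 ≤ᵐ[volume.restrict (Ioo a 1)] fun x ↦ γ * (1 - x) ^ (γ - 1) := by
    filter_upwards [ae_restrict_mem measurableSet_Ioo] with x hx
    have := rpow_nonneg (sub_nonneg.2 hx.2.le) (γ - 1)
    positivity
  rw [betaOneGamma, withDensity_apply _ measurableSet_Ioo,
    setLIntegral_congr_fun measurableSet_Ioo fun x hx ↦ by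
      rw [indicator_of_mem (Ioo_subset_Icc_self.trans (Icc_subset_Icc ha₀ le_rfl) hx)],
    ← ofReal_integral_eq_lintegral_ofReal hint hnonneg, ← integral_Ioc_eq_integral_Ioo,
    ← intervalIntegral.integral_of_le ha₁, integral_mul_one_sub_rpow_sub_one hγ]

theorem beta_log_tail_general {Ω : Type*} [MeasurableSpace Ω] (ℙ : Measure Ω)
    (γ : ℝ) (hγ : 0 < γ) (X : Ω → ℝ) (hX : Measurable X)
    (hlaw : Measure.map X ℙ = betaOneGamma γ) (u : ℝ) (hu : 0 ≤ u) :
    ℙ {ω | u < Real.log ((1 + Real.sqrt (X ω)) / (1 - Real.sqrt (X ω)))} =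
      ENNReal.ofReal ((1 / Real.cosh (u / 2)) ^ (2 * γ)) := by
  have hmeas : MeasurableSet {x : ℝ | u < log ((1 + √x) / (1 - √x))} :=
    measurableSet_lt measurable_const (by fun_prop)
  calc ℙ (X ⁻¹' {x | u < log ((1 + √x) / (1 - √x))})
      = betaOneGamma γ (Icc 0 1 ∩ {x | u < log ((1 + √x) / (1 - √x))}) := by
        rw [← Measure.map_apply hX hmeas, hlaw, inter_comm,
          measure_inter_conull (betaOneGamma_compl_Icc γ)]
    _ = ENNReal.ofReal ((1 - tanh (u / 2) ^ 2) ^ γ) := by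
        rw [inter_Icc_setOf_lt_log_eq_Ioo hu,
          betaOneGamma_Ioo hγ (sq_nonneg _) (tanh_sq_lt_one _).le]
    _ = ENNReal.ofReal ((1 / cosh (u / 2)) ^ (2 * γ)) := by
        rw [one_sub_tanh_sq, ← rpow_natCast, ← rpow_mul (by positivity)]
        norm_num

theorem beta_log_tail {Ω : Type*} [MeasurableSpace Ω] (ℙ : Measure Ω) [IsProbabilityMeasure ℙ]
    (γ : ℝ) (hγ : 0 < γ) (X : Ω → ℝ) (hX : Measurable X)
    (hlaw : Measure.map X ℙ = betaOneGamma γ) (u : ℝ) (hu : 0 ≤ u) :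
    ℙ {ω | u < Real.log ((1 + Real.sqrt (X ω)) / (1 - Real.sqrt (X ω)))} =
      ENNReal.ofReal ((1 / Real.cosh (u / 2)) ^ (2 * γ)) :=
  beta_log_tail_general ℙ γ hγ X hX hlaw u hu
end

section
/- For 0 < t, ∫₀^∞ ((e^{−r²/(2t) − t/8} sinh(r))/t − p(r,t)) dr = √(π/2) · e^{3t/8} · (2Φ(√t) − 1)/√t − 1, where p(·,t) is a probability density; moreover for 0 < t ≤ 1 this quantity is at most e^{3t/8} − 1 ≤ t/2. In particular, √(π/2)·e^{3t/8}·(2Φ(√t)−1)/√t − 1 ≤ t/2 for 0 < t ≤ 1. -/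
/-!
Since the standard normal density is at most `1 / √(2π)` and `Φ(0) = 1/2`, we have
`2Φ(x) - 1 = 2 ∫₀ˣ φ ≤ 2x / √(2π)`, so the left-hand side is at most `e^{3t/8}`.
By convexity of `exp` on `[0, 3/8]` and `e^{3/8} ≤ 3/2`, `e^{3t/8} ≤ 1 + t/2` for `t ∈ [0, 1]`.
-/

open MeasureTheory

/-- The standard normal cumulative distribution function. -/
noncomputable def stdNormalCdf (x : ℝ) : ℝ :=
  ∫ u in Set.Iic x, Real.exp (-u ^ 2 / 2) / Real.sqrt (2 * Real.pi)

open Real Set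

lemma integrable_stdNormalDensity :
    Integrable (fun u : ℝ => exp (-u ^ 2 / 2) / √(2 * π)) := by
  convert (integrable_exp_neg_mul_sq (by norm_num : (0 : ℝ) < 1 / 2)).div_const (√(2 * π))
    using 3 with u
  ring_nf

lemma stdNormalCdf_sub_stdNormalCdf (a b : ℝ) :
    stdNormalCdf b - stdNormalCdf a = ∫ u in a..b, exp (-u ^ 2 / 2) / √(2 * π) :=
  intervalIntegral.integral_Iic_sub_Iic integrable_stdNormalDensity.integrableOn
    integrable_stdNormalDensity.integrableOn

lemma stdNormalCdf_sub_stdNormalCdf_le {a b : ℝ} (hab : a ≤ b) :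
    stdNormalCdf b - stdNormalCdf a ≤ (b - a) / √(2 * π) := by
  rw [stdNormalCdf_sub_stdNormalCdf]
  calc (∫ u in a..b, exp (-u ^ 2 / 2) / √(2 * π)) ≤ ∫ _ in a..b, 1 / √(2 * π) := by
        refine intervalIntegral.integral_mono_on hab
          integrable_stdNormalDensity.intervalIntegrable intervalIntegrable_const fun u _ => ?_
        gcongr
        exact exp_le_one_iff.mpr (by nlinarith [sq_nonneg u])
    _ = (b - a) / √(2 * π) := by rw [intervalIntegral.integral_const, smul_eq_mul]; ring

lemma stdNormalCdf_zero : stdNormalCdf 0 = 1 / 2 := by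
  have h_symm : (∫ u in Iic (0 : ℝ), exp (-u ^ 2 / 2)) = ∫ u in Ioi (0 : ℝ), exp (-u ^ 2 / 2) := by
    rw [← neg_zero, ← integral_comp_neg_Iic]
    simp
  have h_half : (∫ u in Ioi (0 : ℝ), exp (-u ^ 2 / 2)) = √(2 * π) / 2 := by
    convert integral_gaussian_Ioi (1 / 2) using 3 <;> ring_nf
  rw [stdNormalCdf, integral_div, h_symm, h_half, div_div, div_eq_iff (by positivity)]
  ring

lemma sqrt_pi_div_two_mul_two_mul_stdNormalCdf_sub_one_le {x : ℝ} (hx : 0 ≤ x) :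
    √(π / 2) * (2 * stdNormalCdf x - 1) ≤ x := by
  have h_sqrt : √(2 * π) = 2 * √(π / 2) := by
    rw [show 2 * π = 2 ^ 2 * (π / 2) by ring, sqrt_mul (by positivity), sqrt_sq zero_le_two]
  have h_cdf := stdNormalCdf_sub_stdNormalCdf_le hx
  rw [stdNormalCdf_zero, sub_zero, h_sqrt, le_div_iff₀ (by positivity)] at h_cdf
  linarith

lemma exp_three_eighths_le : exp (3 / 8) ≤ 3 / 2 := by
  have h_three : exp 3 ≤ (3 / 2) ^ 8 :=
    calc exp 3 = exp 1 ^ 3 := by rw [← exp_nat_mul]; norm_num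
      _ ≤ 2.72 ^ 3 := by gcongr; exact (exp_one_lt_d9.trans (by norm_num)).le
      _ ≤ (3 / 2) ^ 8 := by norm_num
  rw [← pow_le_pow_iff_left₀ (exp_pos _).le (by norm_num) (by norm_num : 8 ≠ 0), ← exp_nat_mul]
  norm_num at h_three ⊢
  exact h_three

lemma exp_three_mul_div_eight_le {t : ℝ} (ht0 : 0 ≤ t) (ht1 : t ≤ 1) :
    exp (3 * t / 8) ≤ 1 + t / 2 := by
  have h_conv := convexOn_exp.2 (mem_univ 0) (mem_univ (3 / 8)) (sub_nonneg.2 ht1) ht0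
    (sub_add_cancel 1 t)
  simp only [smul_eq_mul, mul_zero, zero_add, exp_zero, mul_one] at h_conv
  calc exp (3 * t / 8) = exp (t * (3 / 8)) := by ring_nf
    _ ≤ 1 - t + t * exp (3 / 8) := h_conv
    _ ≤ 1 + t / 2 := by nlinarith [exp_three_eighths_le]

theorem gaussian_cdf_ineq (t : ℝ) (ht0 : 0 < t) (ht1 : t ≤ 1) :
    Real.sqrt (Real.pi / 2) * Real.exp (3 * t / 8) * (2 * stdNormalCdf (Real.sqrt t) - 1) /
        Real.sqrt t ≤ 1 + t / 2 := by
  have h_sqrt : 0 < √t := sqrt_pos.mpr ht0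
  calc √(π / 2) * exp (3 * t / 8) * (2 * stdNormalCdf √t - 1) / √t
      = exp (3 * t / 8) * (√(π / 2) * (2 * stdNormalCdf √t - 1)) / √t := by ring
    _ ≤ exp (3 * t / 8) * √t / √t := by
      gcongr
      exact sqrt_pi_div_two_mul_two_mul_stdNormalCdf_sub_one_le h_sqrt.le
    _ = exp (3 * t / 8) := mul_div_cancel_right₀ _ h_sqrt.ne'
    _ ≤ 1 + t / 2 := exp_three_mul_div_eight_le ht0.le ht1
end

section
/- Let W = (W₁, W₂) be a standard two-dimensional Brownian motion. Then for 0 < t ≤ a, P(max_{0 ≤ s ≤ t}(|W(s)| + s/2) ≥ a) ≤ (16√t)/(a√π) · exp(−a²/(16t)). -/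
open MeasureTheory

/-- A standard one-dimensional Brownian motion started at 0. -/
structure IsStandardBM {Ω : Type*} [MeasurableSpace Ω] (μ : Measure Ω)
    (B : ℝ → Ω → ℝ) : Prop where
  meas : ∀ t, Measurable (B t)
  start : ∀ᵐ ω ∂μ, B 0 ω = 0
  cont : ∀ᵐ ω ∂μ, Continuous fun t => B t ω
  incr_law : ∀ s t : ℝ, 0 ≤ s → s ≤ t →
    Measure.map (fun ω => B t ω - B s ω) μ = ProbabilityTheory.gaussianReal 0 ((t - s).toNNReal)
  indep_incr : ∀ n : ℕ, ∀ u : Fin (n + 1) → ℝ, Monotone u → (∀ i, 0 ≤ u i) →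
    ProbabilityTheory.iIndepFun
      (fun i : Fin n => fun ω => B (u i.succ) ω - B (u i.castSucc) ω) μ


/-!
Since `s ≤ t ≤ a`, the event forces `|W(s)| ≥ a / 2` for some `s ≤ t`, hence
`|Wᵢ(s)| ≥ a / (2√2)` for one coordinate `i`, and so `±Wᵢ` reaches level `c = a / (2√2)` before
time `t`. For each of these four one-dimensional Brownian motions the reflection principle bounds
this probability by `2 P(B(t) ≥ c)`: on a finite grid this is Lévy's inequality, obtained by
splitting according to the first time the level is reached and using that the increment after
that time is independent of the past and nonnegative with probability at least `1 / 2`;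
continuity of the paths passes to the whole interval along dyadic grids. The Gaussian tail bound
`P(B(t) ≥ c) ≤ √t / (c √(2π)) · exp(-c² / (2t))` then gives the claim.
-/

open ProbabilityTheory Real Filter Set
open scoped NNReal ENNReal Topology

lemma one_le_two_mul_gaussianReal_Ici_zero (v : ℝ≥0) : 1 ≤ 2 * gaussianReal 0 v (Ici 0) := by
  have hsymm : gaussianReal 0 v (Iic 0) = gaussianReal 0 v (Ici 0) := by
    conv_lhs => rw [← neg_zero, ← gaussianReal_map_neg]
    rw [Measure.map_apply measurable_neg measurableSet_Iic]
    simp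
  calc (1 : ℝ≥0∞) = gaussianReal 0 v (Iic 0 ∪ Ici 0) := by simp
    _ ≤ gaussianReal 0 v (Iic 0) + gaussianReal 0 v (Ici 0) := measure_union_le _ _
    _ = 2 * gaussianReal 0 v (Ici 0) := by rw [hsymm, two_mul]

lemma integrable_mul_exp_neg_sq_div {v : ℝ} (hv : 0 < v) :
    Integrable fun x => x * exp (-x ^ 2 / (2 * v)) := by
  simpa [neg_div, div_eq_inv_mul] using
    integrable_mul_exp_neg_mul_sq (by positivity : 0 < (2 * v)⁻¹)

lemma integral_Ioi_mul_exp_neg_sq_div {v : ℝ} (hv : 0 < v) (c : ℝ) :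
    ∫ x in Ioi c, x * exp (-x ^ 2 / (2 * v)) = v * exp (-c ^ 2 / (2 * v)) := by
  have hderiv (x : ℝ) : HasDerivAt (fun y => -v * exp (-y ^ 2 / (2 * v)))
      (x * exp (-x ^ 2 / (2 * v))) x := by
    have h : HasDerivAt (fun y : ℝ => -y ^ 2 / (2 * v)) (-(2 * x) / (2 * v)) x := by
      simpa using ((hasDerivAt_pow 2 x).fun_neg).div_const (2 * v)
    exact (h.exp.const_mul (-v)).congr_deriv (by field_simp)
  have hlim : Tendsto (fun y => -v * exp (-y ^ 2 / (2 * v))) atTop (𝓝 0) := by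
    have h := (tendsto_exp_atBot.comp (tendsto_neg_atTop_atBot.comp
      ((tendsto_pow_atTop two_ne_zero).atTop_div_const (by positivity : 0 < 2 * v)))).const_mul (-v)
    simpa [Function.comp_def, neg_div] using h
  rw [integral_Ioi_of_hasDerivAt_of_tendsto' (fun x _ => hderiv x)
    (integrable_mul_exp_neg_sq_div hv).integrableOn hlim]
  ring

lemma gaussianReal_Ici_le {v : ℝ≥0} (hv : v ≠ 0) {c : ℝ} (hc : 0 < c) :
    gaussianReal 0 v (Ici c) ≤
      ENNReal.ofReal (√v / (c * √(2 * π)) * exp (-c ^ 2 / (2 * v))) := by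
  have hv' : (0 : ℝ) < v := by positivity
  rw [gaussianReal_apply_eq_integral 0 hv]
  refine ENNReal.ofReal_le_ofReal ?_
  have hpdf : gaussianPDFReal 0 v = fun x => (√(2 * π * v))⁻¹ * exp (-x ^ 2 / (2 * v)) := by
    simp [gaussianPDFReal_def]
  calc ∫ x in Ici c, gaussianPDFReal 0 v x
      ≤ ∫ x in Ici c, (√(2 * π * v))⁻¹ / c * (x * exp (-x ^ 2 / (2 * v))) := by
        refine setIntegral_mono_on (integrable_gaussianPDFReal 0 v).integrableOn
          ((integrable_mul_exp_neg_sq_div hv').const_mul _).integrableOn measurableSet_Ici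
          fun x hx => ?_
        rw [hpdf]
        calc (√(2 * π * v))⁻¹ * exp (-x ^ 2 / (2 * v))
            ≤ x / c * ((√(2 * π * v))⁻¹ * exp (-x ^ 2 / (2 * v))) :=
              le_mul_of_one_le_left (by positivity) ((one_le_div hc).2 hx)
          _ = _ := by ring
    _ = (√(2 * π * v))⁻¹ / c * (v * exp (-c ^ 2 / (2 * v))) := by
        rw [integral_const_mul, integral_Ici_eq_integral_Ioi,
          integral_Ioi_mul_exp_neg_sq_div hv']
    _ = √v / (c * √(2 * π)) * exp (-c ^ 2 / (2 * v)) := by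
        rw [sqrt_mul (by positivity) (v : ℝ)]
        field_simp
        rw [sq_sqrt hv'.le]

lemma exists_dyadic_near {t δ s : ℝ} (ht : 0 < t) (hδ : 0 < δ) (hs : s ∈ Icc 0 t) :
    ∃ m j : ℕ, j ≤ 2 ^ m ∧ |t * j / 2 ^ m - s| < δ := by
  obtain ⟨m, hm⟩ := exists_pow_lt_of_lt_one (div_pos hδ ht) one_half_lt_one
  have hmesh : t / 2 ^ m < δ :=
    calc t / 2 ^ m = t * (1 / 2) ^ m := by rw [one_div_pow, mul_one_div]
      _ < t * (δ / t) := by gcongr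
      _ = δ := by field_simp
  set x := s * 2 ^ m / t with hx_def
  have hx : 0 ≤ x := by have := hs.1; positivity
  have hj_le : (⌊x⌋₊ : ℝ) * (t / 2 ^ m) ≤ s :=
    calc (⌊x⌋₊ : ℝ) * (t / 2 ^ m) ≤ x * (t / 2 ^ m) := by gcongr; exact Nat.floor_le hx
      _ = s := by rw [hx_def]; field_simp
  have hj_gt : s < (⌊x⌋₊ + 1) * (t / 2 ^ m) :=
    calc s = x * (t / 2 ^ m) := by rw [hx_def]; field_simp
      _ < (⌊x⌋₊ + 1) * (t / 2 ^ m) := by gcongr; exact Nat.lt_floor_add_one x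
  refine ⟨m, ⌊x⌋₊, Nat.floor_le_of_le ?_, ?_⟩
  · push_cast
    rw [div_le_iff₀ ht, mul_comm]
    gcongr
    exact hs.2
  · rw [show t * ⌊x⌋₊ / 2 ^ m = ⌊x⌋₊ * (t / 2 ^ m) by ring, abs_lt]
    constructor <;> linarith

lemma le_abs_or_le_abs_of_le_sqrt {r x y : ℝ} (h : r ≤ √(x ^ 2 + y ^ 2)) :
    r / √2 ≤ |x| ∨ r / √2 ≤ |y| := by
  by_contra! hxy
  have hr : 0 < r / √2 := (abs_nonneg x).trans_lt hxy.1
  have hsq (z : ℝ) (hz : |z| < r / √2) : z ^ 2 < r ^ 2 / 2 := by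
    have := sq_lt_sq' (neg_lt_of_abs_lt hz) (lt_of_abs_lt hz)
    rwa [div_pow, sq_sqrt zero_le_two] at this
  have hr' : 0 < r := by simpa using mul_pos hr (sqrt_pos.2 zero_lt_two)
  exact h.not_gt ((sqrt_lt' hr').2 (by linarith [hsq x hxy.1, hsq y hxy.2]))

section FirstPassage

variable {Ω : Type*} (S : ℕ → Ω → ℝ) (c : ℝ)

def firstPassage (k : ℕ) : Set Ω := {ω | c ≤ S k ω} ∩ ⋂ j < k, {ω | S j ω < c}

lemma pairwise_disjoint_firstPassage : Pairwise (Function.onFun Disjoint (firstPassage S c)) := by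
  intro k l hkl
  refine Set.disjoint_left.2 fun ω hk hl => ?_
  simp only [firstPassage, mem_inter_iff, mem_iInter, mem_ofPred_eq] at hk hl
  rcases hkl.lt_or_gt with h | h
  · exact (hl.2 k h).not_ge hk.1
  · exact (hk.2 l h).not_ge hl.1

lemma setOf_exists_le_eq_biUnion_firstPassage (n : ℕ) :
    {ω | ∃ k ≤ n, c ≤ S k ω} = ⋃ k ∈ Finset.range (n + 1), firstPassage S c k := by
  classical
  ext ω
  simp only [firstPassage, mem_ofPred_eq, mem_iUnion, mem_inter_iff, mem_iInter,
    Finset.mem_range, Nat.lt_succ_iff, exists_prop]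
  refine ⟨fun ⟨k, hk, hck⟩ => ?_, fun ⟨k, hk, hck, _⟩ => ⟨k, hk, hck⟩⟩
  have hex : ∃ j, c ≤ S j ω := ⟨k, hck⟩
  exact ⟨Nat.find hex, (Nat.find_min' hex hck).trans hk, Nat.find_spec hex,
    fun j hj => not_le.1 (Nat.find_min hex hj)⟩

variable {S} in
lemma measurableSet_firstPassage {m : MeasurableSpace Ω} {k : ℕ}
    (hS : ∀ j ≤ k, Measurable (S j)) : MeasurableSet (firstPassage S c k) :=
  (measurableSet_le measurable_const (hS k le_rfl)).inter
    (.iInter fun j => .iInter fun hj => measurableSet_lt (hS j hj.le) measurable_const)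

end FirstPassage

section

variable {Ω : Type*} [MeasurableSpace Ω] {μ : Measure Ω}

theorem levy_maximal_ineq {S : ℕ → Ω → ℝ} (hS : ∀ k, Measurable (S k)) {n : ℕ}
    (hind : ∀ k ≤ n, Indep (⨆ j ≤ k, MeasurableSpace.comap (S j) inferInstance)
      (MeasurableSpace.comap (fun ω => S n ω - S k ω) inferInstance) μ)
    (hhalf : ∀ k ≤ n, 1 ≤ 2 * μ {ω | 0 ≤ S n ω - S k ω}) (c : ℝ) :
    μ {ω | ∃ k ≤ n, c ≤ S k ω} ≤ 2 * μ {ω | c ≤ S n ω} := by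
  set A := firstPassage S c
  set D : ℕ → Set Ω := fun k => {ω | 0 ≤ S n ω - S k ω}
  have hA_disj : (↑(Finset.range (n + 1)) : Set ℕ).PairwiseDisjoint A :=
    (pairwise_disjoint_firstPassage S c).set_pairwise _
  have hA (k : ℕ) : MeasurableSet (A k) := measurableSet_firstPassage c fun j _ => hS j
  have hD (k : ℕ) : MeasurableSet (D k) := measurableSet_le measurable_const ((hS n).sub (hS k))
  have hfirst (k : ℕ) (hk : k ≤ n) : μ (A k) ≤ 2 * μ (A k ∩ D k) := by
    have hA_past : MeasurableSet[⨆ j ≤ k, MeasurableSpace.comap (S j) inferInstance] (A k) :=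
      measurableSet_firstPassage c fun j hj => measurable_iff_comap_le.2
        (le_iSup₂ (f := fun j (_ : j ≤ k) => MeasurableSpace.comap (S j) inferInstance) j hj)
    change μ (A k) ≤ 2 * μ (A k ∩ (fun ω => S n ω - S k ω) ⁻¹' Ici 0)
    rw [(Indep_iff _ _ μ).1 (hind k hk) _ _ hA_past ⟨Ici 0, measurableSet_Ici, rfl⟩]
    calc μ (A k) = μ (A k) * 1 := (mul_one _).symm
      _ ≤ μ (A k) * (2 * μ (D k)) := by gcongr; exact hhalf k hk
      _ = 2 * (μ (A k) * μ (D k)) := by ring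
  have hreach : ⋃ k ∈ Finset.range (n + 1), A k ∩ D k ⊆ {ω | c ≤ S n ω} := by
    simp only [iUnion_subset_iff]
    rintro k - ω ⟨⟨hck, -⟩, hkn⟩
    simp only [D, mem_ofPred_eq] at hck hkn ⊢
    linarith
  calc μ {ω | ∃ k ≤ n, c ≤ S k ω} = ∑ k ∈ Finset.range (n + 1), μ (A k) := by
        rw [setOf_exists_le_eq_biUnion_firstPassage, measure_biUnion_finset hA_disj fun k _ => hA k]
    _ ≤ ∑ k ∈ Finset.range (n + 1), 2 * μ (A k ∩ D k) :=
        Finset.sum_le_sum fun k hk => hfirst k (Nat.lt_succ_iff.1 (Finset.mem_range.1 hk))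
    _ = 2 * μ (⋃ k ∈ Finset.range (n + 1), A k ∩ D k) := by
        rw [measure_biUnion_finset (hA_disj.mono fun k => inter_subset_left)
          fun k _ => (hA k).inter (hD k), Finset.mul_sum]
    _ ≤ 2 * μ {ω | c ≤ S n ω} := by gcongr

namespace IsStandardBM

variable {B : ℝ → Ω → ℝ}

lemma measurable_sub (hB : IsStandardBM μ B) (s t : ℝ) : Measurable fun ω => B t ω - B s ω :=
  (hB.meas t).sub (hB.meas s)

lemma measure_le_sub (hB : IsStandardBM μ B) {s t : ℝ} (hs : 0 ≤ s) (hst : s ≤ t) (c : ℝ) :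
    μ {ω | c ≤ B t ω - B s ω} = gaussianReal 0 (t - s).toNNReal (Ici c) := by
  rw [← hB.incr_law s t hs hst, Measure.map_apply (hB.measurable_sub s t) measurableSet_Ici]
  rfl

lemma neg (hB : IsStandardBM μ B) : IsStandardBM μ (fun s ω => -B s ω) where
  meas t := (hB.meas t).neg
  start := by filter_upwards [hB.start] with ω h using by simp [h]
  cont := by filter_upwards [hB.cont] with ω h using h.neg
  incr_law s t hs hst := by
    have h := congrArg (Measure.map fun x : ℝ => -x) (hB.incr_law s t hs hst)
    rw [Measure.map_map (measurable_neg : Measurable fun x : ℝ => -x) (hB.measurable_sub s t),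
      gaussianReal_map_neg, neg_zero] at h
    convert h using 2
    ext ω
    simp only [Function.comp_apply]
    ring
  indep_incr n u hu hu0 := by
    convert (hB.indep_incr n u hu hu0).comp (fun _ x => -x) (fun _ => measurable_neg) using 2
    ext ω
    simp only [Function.comp_apply]
    ring

lemma indep_past_increment (hB : IsStandardBM μ B) {u : ℕ → ℝ} (hu : Monotone u)
    (hu0 : 0 ≤ u 0) {k n : ℕ} (hkn : k ≤ n) :
    Indep (⨆ j ≤ k, MeasurableSpace.comap (fun ω => B (u j) ω - B (u 0) ω) inferInstance)
      (MeasurableSpace.comap (fun ω => B (u n) ω - B (u k) ω) inferInstance) μ := by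
  set Y : ℕ → Ω → ℝ := fun i ω => B (u (i + 1)) ω - B (u i) ω
  have hY : iIndep (fun i : Fin n => MeasurableSpace.comap (Y i) inferInstance) μ :=
    (iIndepFun_iff_iIndep _ _ _).1 (hB.indep_incr n (fun i => u i) (fun i j h => hu h)
      fun i => hu0.trans (hu (Nat.zero_le _)))
  have hsum_meas (T : Set (Fin n)) (s : Finset ℕ) (hs : ∀ i ∈ s, ∃ h : i < n, ⟨i, h⟩ ∈ T) :
      Measurable[⨆ i ∈ T, MeasurableSpace.comap (Y i) inferInstance]
        (fun ω => ∑ i ∈ s, Y i ω) := by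
    refine Finset.measurable_sum s fun i hi => ?_
    obtain ⟨h, hT⟩ := hs i hi
    exact measurable_iff_comap_le.2
      (le_iSup₂ (f := fun (i : Fin n) (_ : i ∈ T) => MeasurableSpace.comap (Y i) inferInstance)
        ⟨i, h⟩ hT)
  have htel (j : ℕ) : (fun ω => B (u j) ω - B (u 0) ω) = fun ω => ∑ i ∈ Finset.range j, Y i ω := by
    ext ω
    exact (Finset.sum_range_sub (fun i => B (u i) ω) j).symm
  have hdisj : Disjoint {i : Fin n | (i : ℕ) < k} {i | k ≤ (i : ℕ)} :=
    Set.disjoint_left.2 fun i (hi : (i : ℕ) < k) (hi' : k ≤ (i : ℕ)) => hi.not_ge hi'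
  refine indep_of_indep_of_le_right (indep_of_indep_of_le_left (indep_iSup_of_disjoint
    (fun i => (hB.measurable_sub _ _).comap_le) hY hdisj) ?_) ?_
  · refine iSup₂_le fun j hj => measurable_iff_comap_le.1 ?_
    rw [htel]
    exact hsum_meas _ _ fun i hi =>
      have := Finset.mem_range.1 hi; ⟨by omega, show i < k by omega⟩
  · refine measurable_iff_comap_le.1 ?_
    have : (fun ω => B (u n) ω - B (u k) ω) = fun ω => ∑ i ∈ Finset.Ico k n, Y i ω := by
      ext ω
      rw [Finset.sum_Ico_eq_sub _ hkn, ← congrFun (htel n) ω, ← congrFun (htel k) ω]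
      ring
    rw [this]
    exact hsum_meas _ _ fun i hi =>
      have := Finset.mem_Ico.1 hi; ⟨by omega, show k ≤ i by omega⟩

lemma measure_exists_le_sub_le (hB : IsStandardBM μ B) {u : ℕ → ℝ} (hu : Monotone u)
    (hu0 : 0 ≤ u 0) (n : ℕ) (c : ℝ) :
    μ {ω | ∃ k ≤ n, c ≤ B (u k) ω - B (u 0) ω} ≤
      2 * gaussianReal 0 (u n - u 0).toNNReal (Ici c) := by
  have hu_nonneg (k : ℕ) : 0 ≤ u k := hu0.trans (hu (Nat.zero_le k))
  rw [← hB.measure_le_sub hu0 (hu (Nat.zero_le n))]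
  refine levy_maximal_ineq (fun k => hB.measurable_sub _ _) (fun k hk => ?_) (fun k hk => ?_) c
  · simpa only [sub_sub_sub_cancel_right] using hB.indep_past_increment hu hu0 hk
  · simp only [sub_sub_sub_cancel_right]
    rw [hB.measure_le_sub (hu_nonneg k) (hu hk)]
    exact one_le_two_mul_gaussianReal_Ici_zero _

lemma measure_exists_Icc_le_le_of_lt (hB : IsStandardBM μ B) {t : ℝ} (ht : 0 < t) {c' c : ℝ}
    (hc : c' < c) :
    μ {ω | ∃ s ∈ Icc 0 t, c ≤ B s ω} ≤ 2 * gaussianReal 0 t.toNNReal (Ici c') := by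
  set u : ℕ → ℕ → ℝ := fun m j => t * j / 2 ^ m
  set G : ℕ → Set Ω := fun m => {ω | ∃ j ≤ 2 ^ m, c' ≤ B (u m j) ω - B (u m 0) ω}
  have hu_mono (m : ℕ) : Monotone (u m) := fun i j h => by simp only [u]; gcongr
  have hG_mono : Monotone G := by
    refine monotone_nat_of_le_succ fun m ω ⟨j, hj, hω⟩ => ⟨2 * j, by rw [pow_succ]; omega, ?_⟩
    convert hω using 3 <;> simp only [u] <;> push_cast <;> ring
  have hG (m : ℕ) : μ (G m) ≤ 2 * gaussianReal 0 t.toNNReal (Ici c') := by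
    convert hB.measure_exists_le_sub_le (hu_mono m) (by simp [u]) (2 ^ m) c' using 5
    simp [u]
  -- by continuity, a path reaching `c` at time `s` is above `c'` at a nearby dyadic time
  have hcover : {ω | ∃ s ∈ Icc 0 t, c ≤ B s ω} ≤ᵐ[μ] ⋃ m, G m := by
    filter_upwards [hB.cont, hB.start] with ω hcont hstart ⟨s, hs, hcs⟩
    obtain ⟨δ, hδ, hclose⟩ := Metric.continuous_iff.1 hcont s (c - c') (sub_pos.2 hc)
    obtain ⟨m, j, hj, hjs⟩ := exists_dyadic_near ht hδ hs
    have := hclose (u m j) hjs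
    rw [Real.dist_eq, abs_lt] at this
    refine mem_iUnion.2 ⟨m, j, hj, ?_⟩
    simp only [u, CharP.cast_eq_zero, mul_zero, zero_div, hstart, sub_zero]
    linarith
  calc μ {ω | ∃ s ∈ Icc 0 t, c ≤ B s ω} ≤ μ (⋃ m, G m) := measure_mono_ae hcover
    _ = ⨆ m, μ (G m) := hG_mono.measure_iUnion
    _ ≤ _ := iSup_le hG

lemma measure_exists_Icc_le (hB : IsStandardBM μ B) {t : ℝ} (ht : 0 < t) (c : ℝ) :
    μ {ω | ∃ s ∈ Icc 0 t, c ≤ B s ω} ≤ 2 * gaussianReal 0 t.toNNReal (Ici c) := by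
  have hIci : ⋂ r > 0, Ici (c - r) = Ici c := by
    ext x
    simp only [mem_iInter, mem_Ici, sub_le_iff_le_add]
    exact ⟨fun h => le_of_forall_pos_le_add h, fun h r hr => by linarith⟩
  have hlim := tendsto_measure_biInter_gt (μ := gaussianReal 0 t.toNNReal)
    (s := fun r => Ici (c - r)) (a := 0) (fun r _ => measurableSet_Ici.nullMeasurableSet)
    (fun i j _ hij => Ici_subset_Ici.2 (by linarith)) ⟨1, one_pos, measure_ne_top _ _⟩
  rw [hIci] at hlim
  exact ge_of_tendsto (ENNReal.Tendsto.const_mul hlim (Or.inr ENNReal.ofNat_ne_top))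
    (eventually_nhdsWithin_of_forall fun r (hr : 0 < r) =>
      hB.measure_exists_Icc_le_le_of_lt ht (sub_lt_self c hr))

lemma measure_exists_Icc_le_abs (hB : IsStandardBM μ B) {t : ℝ} (ht : 0 < t) (c : ℝ) :
    μ {ω | ∃ s ∈ Icc 0 t, c ≤ |B s ω|} ≤ 4 * gaussianReal 0 t.toNNReal (Ici c) := by
  have hsub : {ω | ∃ s ∈ Icc 0 t, c ≤ |B s ω|} ⊆
      {ω | ∃ s ∈ Icc 0 t, c ≤ B s ω} ∪ {ω | ∃ s ∈ Icc 0 t, c ≤ -B s ω} := by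
    rintro ω ⟨s, hs, hcs⟩
    rcases le_abs.1 hcs with h | h
    exacts [Or.inl ⟨s, hs, h⟩, Or.inr ⟨s, hs, h⟩]
  calc μ {ω | ∃ s ∈ Icc 0 t, c ≤ |B s ω|}
      ≤ μ {ω | ∃ s ∈ Icc 0 t, c ≤ B s ω} + μ {ω | ∃ s ∈ Icc 0 t, c ≤ -B s ω} :=
        (measure_mono hsub).trans (measure_union_le _ _)
    _ ≤ 2 * gaussianReal 0 t.toNNReal (Ici c) + 2 * gaussianReal 0 t.toNNReal (Ici c) :=
        add_le_add (hB.measure_exists_Icc_le ht c) (hB.neg.measure_exists_Icc_le ht c)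
    _ = 4 * gaussianReal 0 t.toNNReal (Ici c) := by ring

end IsStandardBM

end

theorem bm2d_max_drift_tail_general {Ω : Type*} [MeasurableSpace Ω] (μ : Measure Ω)
    (W₁ W₂ : ℝ → Ω → ℝ)
    (hW₁ : IsStandardBM μ W₁) (hW₂ : IsStandardBM μ W₂)
    (t a : ℝ) (ht : 0 < t) (hta : t ≤ a) :
    μ {ω | ∃ s ∈ Set.Icc (0 : ℝ) t,
        a ≤ Real.sqrt (W₁ s ω ^ 2 + W₂ s ω ^ 2) + s / 2} ≤
      ENNReal.ofReal (16 * Real.sqrt t / (a * Real.sqrt Real.pi) *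
        Real.exp (-a ^ 2 / (16 * t))) := by
  have ha : 0 < a := ht.trans_le hta
  set c := a / 2 / √2
  have hsub : {ω | ∃ s ∈ Icc 0 t, a ≤ √(W₁ s ω ^ 2 + W₂ s ω ^ 2) + s / 2} ⊆
      {ω | ∃ s ∈ Icc 0 t, c ≤ |W₁ s ω|} ∪ {ω | ∃ s ∈ Icc 0 t, c ≤ |W₂ s ω|} := by
    rintro ω ⟨s, hs, h⟩
    have : a / 2 ≤ √(W₁ s ω ^ 2 + W₂ s ω ^ 2) := by linarith [hs.2]
    exact (le_abs_or_le_abs_of_le_sqrt this).imp (⟨s, hs, ·⟩) (⟨s, hs, ·⟩)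
  have htail := gaussianReal_Ici_le (v := t.toNNReal) (by simpa using ht) (c := c) (by positivity)
  rw [Real.coe_toNNReal t ht.le] at htail
  have hconst : 8 * (√t / (c * √(2 * π)) * exp (-c ^ 2 / (2 * t))) =
      16 * √t / (a * √π) * exp (-a ^ 2 / (16 * t)) := by
    simp only [c]
    rw [sqrt_mul zero_le_two, div_pow, div_pow, sq_sqrt zero_le_two]
    field_simp
    ring_nf
  calc μ {ω | ∃ s ∈ Icc 0 t, a ≤ √(W₁ s ω ^ 2 + W₂ s ω ^ 2) + s / 2}
      ≤ μ {ω | ∃ s ∈ Icc 0 t, c ≤ |W₁ s ω|} + μ {ω | ∃ s ∈ Icc 0 t, c ≤ |W₂ s ω|} :=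
        (measure_mono hsub).trans (measure_union_le _ _)
    _ ≤ 4 * gaussianReal 0 t.toNNReal (Ici c) + 4 * gaussianReal 0 t.toNNReal (Ici c) :=
        add_le_add (hW₁.measure_exists_Icc_le_abs ht c) (hW₂.measure_exists_Icc_le_abs ht c)
    _ = 8 * gaussianReal 0 t.toNNReal (Ici c) := by ring
    _ ≤ ENNReal.ofReal 8 * ENNReal.ofReal (√t / (c * √(2 * π)) * exp (-c ^ 2 / (2 * t))) := by
        rw [ENNReal.ofReal_ofNat]
        gcongr
    _ = _ := by rw [← ENNReal.ofReal_mul (by norm_num), hconst]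

theorem bm2d_max_drift_tail {Ω : Type*} [MeasurableSpace Ω] (μ : Measure Ω)
    [IsProbabilityMeasure μ] (W₁ W₂ : ℝ → Ω → ℝ)
    (hW₁ : IsStandardBM μ W₁) (hW₂ : IsStandardBM μ W₂)
    (hindep : ProbabilityTheory.IndepFun (fun ω t => W₁ t ω) (fun ω t => W₂ t ω) μ)
    (t a : ℝ) (ht : 0 < t) (hta : t ≤ a) :
    μ {ω | ∃ s ∈ Set.Icc (0 : ℝ) t,
        a ≤ Real.sqrt (W₁ s ω ^ 2 + W₂ s ω ^ 2) + s / 2} ≤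
      ENNReal.ofReal (16 * Real.sqrt t / (a * Real.sqrt Real.pi) *
        Real.exp (-a ^ 2 / (16 * t))) :=
  bm2d_max_drift_tail_general μ W₁ W₂ hW₁ hW₂ t a ht hta
end

section
/- For all real t, δ with 0 < δ < 1/3 and 0 < t ≤ 1 − δ, one has δ·log(1/(1−t))·log(1/(δ·log(1/(1−t)))) ≤ e^{−1/3}·δ·log(1/δ)·(1−t)^{−1}, provided δ·log(1/(1−t)) ≤ 1. -/
private lemma exp_third_lt : Real.exp (1/3) < 1.3957 := by
  have h1 : Real.exp 1 < 2.7182818286 := Real.exp_one_lt_d9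
  have h3 : Real.exp (1/3) ^ (3:ℕ) = Real.exp 1 := by
    rw [← Real.exp_nat_mul]; norm_num
  have hp : 0 < Real.exp (1/3) := Real.exp_pos _
  nlinarith [sq_nonneg (Real.exp (1/3) - 1.3957), sq_nonneg (Real.exp (1/3) + 1.3957)]

private lemma exp_109_lt : Real.exp 1.09 < 3 := by
  have h1 : Real.exp 1 < 2.7182818286 := Real.exp_one_lt_d9
  have h2 : Real.exp (0.09:ℝ) ≤ 100/91 := by
    have h := Real.add_one_le_exp (-0.09 : ℝ)
    have hp : (0:ℝ) < Real.exp (-0.09) := Real.exp_pos _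
    have he : Real.exp (0.09:ℝ) = (Real.exp (-0.09))⁻¹ := by
      rw [← Real.exp_neg]; norm_num
    rw [he, inv_le_iff_one_le_mul₀ hp]
    nlinarith
  have h3 : Real.exp (1.09:ℝ) = Real.exp 1 * Real.exp 0.09 := by
    rw [← Real.exp_add]; norm_num
  have hp : (0:ℝ) < Real.exp 0.09 := Real.exp_pos _
  nlinarith

theorem calc_log_ineq (t δ : ℝ) (hδ0 : 0 < δ) (hδ1 : δ < 1 / 3) (ht0 : 0 < t)
    (ht1 : t ≤ 1 - δ) (hsmall : δ * Real.log (1 / (1 - t)) ≤ 1) :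
    δ * Real.log (1 / (1 - t)) * Real.log (1 / (δ * Real.log (1 / (1 - t)))) ≤
      Real.exp (-1 / 3) * δ * Real.log (1 / δ) * (1 - t)⁻¹ := by
  have h1t : 0 < 1 - t := by linarith
  have h1t1 : 1 - t < 1 := by linarith
  set L := Real.log (1 / (1 - t)) with hLdef
  have hL0 : 0 < L := by
    rw [hLdef, one_div, Real.log_inv]
    have := Real.log_neg h1t h1t1
    linarith
  have hE : (1 - t)⁻¹ = Real.exp L := by
    rw [hLdef, one_div, Real.exp_log (by positivity)]
  have hE1 : 1 ≤ Real.exp L := Real.one_le_exp hL0.le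
  set K := Real.log (1 / δ) with hKdef
  have hK109 : (1.09:ℝ) ≤ K := by
    rw [hKdef, Real.le_log_iff_exp_le (by positivity)]
    have h3 : (3:ℝ) ≤ 1 / δ := by
      rw [le_div_iff₀ hδ0]; linarith
    exact le_trans exp_109_lt.le h3
  have hK0 : 0 < K := by linarith
  have hlog : Real.log (1 / (δ * L)) = K - Real.log L := by
    rw [one_div, Real.log_inv, Real.log_mul (ne_of_gt hδ0) (ne_of_gt hL0),
      hKdef, one_div, Real.log_inv]
    ring
  -- fact: L ≤ exp(-1) * exp L
  have hLE : L ≤ Real.exp (-1) * Real.exp L := by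
    have h := Real.add_one_le_exp (L - 1)
    have h2 : Real.exp (L - 1) = Real.exp (-1) * Real.exp L := by
      rw [← Real.exp_add]; ring_nf
    linarith [h, h2.le, h2.ge]
  -- fact: -(L * log L) ≤ exp (-1)
  have hLlogL : -(L * Real.log L) ≤ Real.exp (-1) := by
    have he : (0:ℝ) < Real.exp 1 := Real.exp_pos _
    have h := Real.log_le_sub_one_of_pos (show (0:ℝ) < 1 / (L * Real.exp 1) by positivity)
    rw [one_div, Real.log_inv, Real.log_mul (ne_of_gt hL0) (ne_of_gt he),
      Real.log_exp] at h
    have h2 : -Real.log L ≤ (L * Real.exp 1)⁻¹ := by linarith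
    have h3 : -(L * Real.log L) ≤ L * (L * Real.exp 1)⁻¹ := by
      have := mul_le_mul_of_nonneg_left h2 hL0.le
      linarith [this]
    have h4 : L * (L * Real.exp 1)⁻¹ = (Real.exp 1)⁻¹ := by
      field_simp
    rw [h4] at h3
    rw [Real.exp_neg]
    exact h3
  have heinv : Real.exp (-1) ≤ 0.368 := by
    have h := Real.exp_one_gt_d9
    rw [Real.exp_neg, inv_le_comm₀ (Real.exp_pos 1) (by norm_num)]
    linarith
  have hA : (0.7164:ℝ) ≤ Real.exp (-1 / 3) := by
    have h := exp_third_lt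
    have hp : (0:ℝ) < Real.exp (1/3) := Real.exp_pos _
    have he : Real.exp (-1/3 : ℝ) = (Real.exp (1/3))⁻¹ := by
      rw [← Real.exp_neg]; norm_num
    rw [he, le_inv_comm₀ (by norm_num) hp]
    linarith
  rw [hE, hlog]
  set A := Real.exp (-1/3) with hAdef
  set einv := Real.exp (-1) with heinvdef
  set E := Real.exp L with hEdef
  clear_value A einv E
  clear_value L K
  have step1 : δ * L * (K - Real.log L) ≤ δ * (L * K + einv) := by
    nlinarith [hLlogL, hδ0.le]
  have step2 : L * K ≤ einv * E * K := by
    nlinarith [hLE, hK0.le]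
  have step3 : einv * E * K + einv ≤ A * K * E := by
    have hKE : (1.09:ℝ) ≤ K * E := by nlinarith
    nlinarith [heinv, hA, hKE]
  calc δ * L * (K - Real.log L) ≤ δ * (L * K + einv) := step1
    _ ≤ δ * (einv * E * K + einv) := by nlinarith
    _ ≤ δ * (A * K * E) := by nlinarith
    _ = A * δ * K * E := by ring
end

section
/- Let x, y, x₁, y₁ be reals with y > 0, y₁ > 0, let X = (1/√y)·[[1, −x],[0, y]] and X₁ = (1/√y₁)·[[1, −x₁],[0, y₁]] be 2×2 matrices. Then the squared Frobenius norm ‖I − X₁X^{−1}‖² equals ((x−x₁)/√(y y₁))² + (1 − √(y₁/y))² + (1 − √(y/y₁))², and this is at most ((x−x₁)²)/(y y₁) + (√(y/y₁) − √(y₁/y))² = 4·sinh(d_H(x+iy, x₁+iy₁)/2)², where d_H is the hyperbolic distance in the upper half plane given by 4 sinh(d_H/2)² = (x−x₁)²/(y y₁) + (√(y/y₁) − √(y₁/y))². -/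
open Matrix

/-!
`X₁ X⁻¹` is upper triangular with diagonal entries `a = √(y/y₁)` and `b = √(y₁/y)`, so
`I - X₁ X⁻¹` has Frobenius norm squared `(1 - a)² + (1 - b)²` plus the square of the
off-diagonal entry `(x - x₁)/√(y y₁)`. Since `a b = 1`, AM-GM gives `a + b ≥ 2`, which is
exactly `(1 - a)² + (1 - b)² ≤ (a - b)²`.
-/

section UpperTriangular

variable {K : Type*} [Field K]

theorem inv_smul_upperTriangular {s y : K} (x : K) (hs : s ≠ 0) (hy : s ^ 2 = y) :
    ((1 / s) • !![1, -x; 0, y])⁻¹ = (1 / s) • !![y, x; 0, 1] := by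
  refine Matrix.inv_eq_right_inv ?_
  rw [smul_mul_smul_comm, mul_fin_two, one_fin_two, ← hy]
  ext i j
  fin_cases i <;> fin_cases j <;> simp <;> field_simp

theorem one_sub_smul_upperTriangular_mul {s t y y₁ : K} (x x₁ : K) (hs : s ≠ 0) (ht : t ≠ 0)
    (hy : s ^ 2 = y) (hy₁ : t ^ 2 = y₁) :
    1 - ((1 / t) • !![1, -x₁; 0, y₁]) * ((1 / s) • !![y, x; 0, 1]) =
      !![1 - s / t, -((x - x₁) / (s * t)); 0, 1 - t / s] := by
  rw [smul_mul_smul_comm, mul_fin_two, one_fin_two, ← hy, ← hy₁]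
  ext i j
  fin_cases i <;> fin_cases j <;> simp [← sub_eq_add_neg] <;> field_simp

end UpperTriangular

theorem sum_sq_entries_fin_two {R : Type*} [CommRing R] (a b c d : R) :
    ∑ i, ∑ j, (!![a, b; c, d] i j) ^ 2 = a ^ 2 + b ^ 2 + c ^ 2 + d ^ 2 := by
  simp only [of_apply, cons_val', cons_val_fin_one, Fin.sum_univ_two, cons_val_zero, cons_val_one]
  ring

theorem one_sub_sq_add_one_sub_sq_le_sub_sq {a b : ℝ} (ha : 0 ≤ a) (hb : 0 ≤ b) (hab : a * b = 1) :
    (1 - b) ^ 2 + (1 - a) ^ 2 ≤ (a - b) ^ 2 := by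
  nlinarith [sq_nonneg (a - b), sq_nonneg (a + b - 2)]

theorem frobenius_hyperbolic_bound (x y x₁ y₁ : ℝ) (hy : 0 < y) (hy₁ : 0 < y₁) :
    (∑ i, ∑ j,
        ((1 - ((1 / Real.sqrt y₁) • !![1, -x₁; 0, y₁]) *
            ((1 / Real.sqrt y) • !![1, -x; 0, y])⁻¹) i j) ^ 2) =
      ((x - x₁) / Real.sqrt (y * y₁)) ^ 2 + (1 - Real.sqrt (y₁ / y)) ^ 2 +
        (1 - Real.sqrt (y / y₁)) ^ 2 ∧
    ((x - x₁) / Real.sqrt (y * y₁)) ^ 2 + (1 - Real.sqrt (y₁ / y)) ^ 2 +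
        (1 - Real.sqrt (y / y₁)) ^ 2 ≤
      (x - x₁) ^ 2 / (y * y₁) + (Real.sqrt (y / y₁) - Real.sqrt (y₁ / y)) ^ 2 := by
  have hs : Real.sqrt y ≠ 0 := (Real.sqrt_pos.mpr hy).ne'
  have ht : Real.sqrt y₁ ≠ 0 := (Real.sqrt_pos.mpr hy₁).ne'
  have hsy := Real.sq_sqrt hy.le
  have hty := Real.sq_sqrt hy₁.le
  constructor
  · rw [inv_smul_upperTriangular x hs hsy, one_sub_smul_upperTriangular_mul x x₁ hs ht hsy hty,
      sum_sq_entries_fin_two, Real.sqrt_div' _ hy.le, Real.sqrt_div' _ hy₁.le,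
      Real.sqrt_mul hy.le]
    ring
  · have hab : Real.sqrt (y / y₁) * Real.sqrt (y₁ / y) = 1 := by
      rw [← Real.sqrt_mul (div_nonneg hy.le hy₁.le), div_mul_div_comm, mul_comm y,
        div_self (mul_pos hy₁ hy).ne', Real.sqrt_one]
    have hdiag := one_sub_sq_add_one_sub_sq_le_sub_sq (Real.sqrt_nonneg _) (Real.sqrt_nonneg _) hab
    rw [div_pow, Real.sq_sqrt (mul_pos hy hy₁).le]
    linarith
end
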